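/- Let |α⟩ = (|01⟩ + |10⟩)/√2. For every pair of single-qubit states |x⟩, |y⟩ ∈ {|+⟩, |−⟩, |+i⟩, |−i⟩} and every standard basis vector |s⟩ of ℂ² ⊗ ℂ², there exist a 2×2 unitary matrix V and a complex number c with |c| = 1 such that (V ⊗ I)|α⟩ = c · U_{|s⟩}(|x⟩ ⊗ |y⟩). Hence an eavesdropper who shares |α⟩ with the honest party can, after learning the nonce, locally transform the joint state into exactly the state the dealer intended, so Hsu's original nonce set admits an undetectable intercept-fake-resend attack. -/

import Mathlib

open scoped ComplexConjugate
open Finset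

noncomputable section

/-- Standard (computational) basis vector `|s⟩` of the two-qubit space `ℂ² ⊗ ℂ²`. -/
def e (s : Fin 2 × Fin 2) : Fin 2 × Fin 2 → ℂ := fun p => if p = s then 1 else 0

/-- The standard inner product `⟨u|v⟩` on two-qubit vectors
(conjugate-linear in the first argument). -/
def inner2 (u v : Fin 2 × Fin 2 → ℂ) : ℂ := ∑ p, conj (u p) * v p

/-- The Grover reflection operator `U_{|x⟩} = I - 2|x⟩⟨x|` applied to `v`. -/
def grover (x v : Fin 2 × Fin 2 → ℂ) : Fin 2 × Fin 2 → ℂ :=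
  v - (2 * inner2 x v) • x

/-- Tensor product `u ⊗ v` of two single-qubit vectors. -/
def tensor (u v : Fin 2 → ℂ) : Fin 2 × Fin 2 → ℂ := fun p => u p.1 * v p.2

/-- The operator `V ⊗ I` (acting on the first, eavesdropper's, qubit) applied to a
two-qubit vector. -/
def applyAI (A : Matrix (Fin 2) (Fin 2) ℂ) (w : Fin 2 × Fin 2 → ℂ) :
    Fin 2 × Fin 2 → ℂ := fun p => ∑ j, A p.1 j * w (j, p.2)

/-- The single-qubit state `|+⟩ = (|0⟩ + |1⟩)/√2`. -/
def qplus : Fin 2 → ℂ := ![(Real.sqrt 2 : ℂ)⁻¹, (Real.sqrt 2 : ℂ)⁻¹]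

/-- The single-qubit state `|−⟩ = (|0⟩ − |1⟩)/√2`. -/
def qminus : Fin 2 → ℂ := ![(Real.sqrt 2 : ℂ)⁻¹, -(Real.sqrt 2 : ℂ)⁻¹]

/-- The single-qubit state `|+i⟩ = (|0⟩ + i|1⟩)/√2`. -/
def qplusI : Fin 2 → ℂ := ![(Real.sqrt 2 : ℂ)⁻¹, Complex.I * (Real.sqrt 2 : ℂ)⁻¹]

/-- The single-qubit state `|−i⟩ = (|0⟩ − i|1⟩)/√2`. -/
def qminusI : Fin 2 → ℂ := ![(Real.sqrt 2 : ℂ)⁻¹, -Complex.I * (Real.sqrt 2 : ℂ)⁻¹]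

/-- The entangled state `|α⟩ = (|01⟩ + |10⟩)/√2` used in the Hao et al. attack. -/
def alphaState : Fin 2 × Fin 2 → ℂ := (Real.sqrt 2 : ℂ)⁻¹ • (e (0, 1) + e (1, 0))

lemma sqrt2_half : conj ((Real.sqrt 2 : ℂ)⁻¹) * (Real.sqrt 2 : ℂ)⁻¹ = 1/2 := by
  rw [← Complex.ofReal_inv, Complex.conj_ofReal, ← Complex.ofReal_mul, ← mul_inv,
    Real.mul_self_sqrt (by norm_num)]
  norm_num


lemma key (x y : Fin 2 → ℂ)
    (hx0 : conj (x 0) * x 0 = 1/2) (hx1 : conj (x 1) * x 1 = 1/2)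
    (hy0 : conj (y 0) * y 0 = 1/2) (hy1 : conj (y 1) * y 1 = 1/2)
    (s : Fin 2 × Fin 2) :
    ∃ V ∈ Matrix.unitaryGroup (Fin 2) ℂ, ∃ c : ℂ, ‖c‖ = 1 ∧
      applyAI V alphaState = c • grover (e s) (tensor x y) := by
  set r : ℂ := (Real.sqrt 2 : ℂ) with hrdef
  have hr : r * r = 2 := by
    rw [hrdef, ← Complex.ofReal_mul, Real.mul_self_sqrt (by norm_num)]
    norm_num
  have hrne : r ≠ 0 := by
    intro h; rw [h] at hr; norm_num at hr
  have hcr : conj r = r := by rw [hrdef]; exact Complex.conj_ofReal _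
  set ε : Fin 2 × Fin 2 → ℂ := fun p => if p = s then -1 else 1 with hε
  have hεc : ∀ p, conj (ε p) = ε p := by
    intro p; simp only [hε]; split <;> simp
  have hεsq : ∀ p, ε p * ε p = 1 := by
    intro p; simp only [hε]; split <;> norm_num
  have horth : ε (0,1) * ε (1,1) + ε (0,0) * ε (1,0) = 0 := by
    obtain ⟨a, b⟩ := s
    fin_cases a <;> fin_cases b <;> norm_num [hε, Prod.ext_iff]
  have hgrover : ∀ p, grover (e s) (tensor x y) p = ε p * (x p.1 * y p.2) := by
    intro p
    have hin : inner2 (e s) (tensor x y) = x s.1 * y s.2 := by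
      simp [inner2, e, tensor, apply_ite, Fintype.sum_prod_type, Fin.sum_univ_two]
    simp only [grover, Pi.sub_apply, Pi.smul_apply, smul_eq_mul, hin, e, hε, tensor]
    split
    · rename_i h; rw [h]; ring
    · ring
  refine ⟨Matrix.of fun i j => if j = 0 then r * ε (i,1) * x i * y 1 else r * ε (i,0) * x i * y 0,
    ?_, 1, by simp, ?_⟩
  · rw [Matrix.mem_unitaryGroup_iff]
    ext i j
    fin_cases i <;> fin_cases j <;>
      simp only [Matrix.mul_apply, Matrix.one_apply, Fin.sum_univ_two, Matrix.star_apply,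
        Matrix.of_apply, RCLike.star_def, map_mul, hεc, Fin.isValue, if_true, if_false,
        Complex.conj_ofReal, hcr, ← hrdef, Fin.mk_zero, Fin.mk_one, one_ne_zero, if_false,
        Prod.mk.injEq, and_false, and_true, Fin.zero_eq_one_iff, Fin.one_eq_zero_iff,
        Nat.succ_ne_self]
    · linear_combination (ε (0,1)*ε (0,1)*(x 0*conj (x 0))*(y 1*conj (y 1)) + ε (0,0)*ε (0,0)*(x 0*conj (x 0))*(y 0*conj (y 0)))*hr + 2*(x 0*conj (x 0))*(y 1*conj (y 1))*(hεsq (0,1)) + 2*(x 0*conj (x 0))*(y 0*conj (y 0))*(hεsq (0,0)) + 2*((y 1*conj (y 1))+(y 0*conj (y 0)))*hx0 + hy0 + hy1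
    · linear_combination (ε (0,1)*ε (1,1)*(x 0*conj (x 1))*(y 1*conj (y 1)) + ε (0,0)*ε (1,0)*(x 0*conj (x 1))*(y 0*conj (y 0)))*hr + 2*ε (0,1)*ε (1,1)*(x 0*conj (x 1))*hy1 + 2*ε (0,0)*ε (1,0)*(x 0*conj (x 1))*hy0 + (x 0*conj (x 1))*horth
    · linear_combination (ε (1,1)*ε (0,1)*(x 1*conj (x 0))*(y 1*conj (y 1)) + ε (1,0)*ε (0,0)*(x 1*conj (x 0))*(y 0*conj (y 0)))*hr + 2*ε (1,1)*ε (0,1)*(x 1*conj (x 0))*hy1 + 2*ε (1,0)*ε (0,0)*(x 1*conj (x 0))*hy0 + (x 1*conj (x 0))*horth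
    · linear_combination (ε (1,1)*ε (1,1)*(x 1*conj (x 1))*(y 1*conj (y 1)) + ε (1,0)*ε (1,0)*(x 1*conj (x 1))*(y 0*conj (y 0)))*hr + 2*(x 1*conj (x 1))*(y 1*conj (y 1))*(hεsq (1,1)) + 2*(x 1*conj (x 1))*(y 0*conj (y 0))*(hεsq (1,0)) + 2*((y 1*conj (y 1))+(y 0*conj (y 0)))*hx1 + hy0 + hy1
  · funext p
    obtain ⟨i, j⟩ := p
    rw [Pi.smul_apply, hgrover, one_smul]
    simp only [applyAI, alphaState, Fin.sum_univ_two, Matrix.of_apply, Pi.smul_apply,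
      Pi.add_apply, e, smul_eq_mul, ← hrdef]
    fin_cases i <;> fin_cases j <;>
      · norm_num [Prod.ext_iff]
        field_simp

lemma mem_half (z : Fin 2 → ℂ)
    (hz : z ∈ ({qplus, qminus, qplusI, qminusI} : Set (Fin 2 → ℂ))) (i : Fin 2) :
    conj (z i) * z i = 1/2 := by
  simp only [Set.mem_insert_iff, Set.mem_singleton_iff] at hz
  rcases hz with rfl | rfl | rfl | rfl <;> fin_cases i <;>
    simp only [qplus, qminus, qplusI, qminusI, Matrix.cons_val_zero, Matrix.cons_val_one,
      Matrix.head_cons, map_mul, map_neg, Complex.conj_I, Fin.mk_zero, Fin.mk_one,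
      Fin.isValue] <;>
    first
      | exact sqrt2_half
      | linear_combination sqrt2_half
      | linear_combination sqrt2_half -
          (conj ((Real.sqrt 2 : ℂ)⁻¹) * (Real.sqrt 2 : ℂ)⁻¹) * Complex.I_sq


/-- For every nonce `|x⟩⊗|y⟩` from Hsu's original set and every secret `|s⟩`, the
eavesdropper can locally (by a unitary `V` on her qubit) transform `|α⟩` into
`U_{|s⟩}(|x⟩⊗|y⟩)` up to a unimodular phase: Hsu's original nonce set admits an
undetectable intercept-fake-resend attack. -/
theorem hsu_nonces_admit_undetectable_attack
    (x y : Fin 2 → ℂ) (hx : x ∈ ({qplus, qminus, qplusI, qminusI} : Set (Fin 2 → ℂ)))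
    (hy : y ∈ ({qplus, qminus, qplusI, qminusI} : Set (Fin 2 → ℂ)))
    (s : Fin 2 × Fin 2) :
    ∃ V ∈ Matrix.unitaryGroup (Fin 2) ℂ, ∃ c : ℂ, ‖c‖ = 1 ∧
      applyAI V alphaState = c • grover (e s) (tensor x y) :=
  key x y (mem_half x hx 0) (mem_half x hx 1) (mem_half y hy 0) (mem_half y hy 1) s

end
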